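/- arXiv:2106.09767 — 2 statements merged into one kernel-verified Lean document; each statement's English description precedes it below -/
import Mathlib

section
/- Let (F,v) be a valued field of equal characteristic (char F = char Fv) with value group Γ, let q be a prime number, and let t ∈ F be such that the q cosets qΓ, qΓ + v(t), …, qΓ + (q−1)v(t) are pairwise distinct in Γ. Assume F contains a primitive q-th root of unity, and let K = F(u) where u^q = t (a cyclic extension of F of degree q). Then for every a = b₀ + b₁u + ⋯ + b_{q−1}u^{q−1} ∈ K with b₀, …, b_{q−1} ∈ F, one has v(N_{K/F}(a)) = min{ i·v(t) + q·v(bᵢ) : i = 0, …, q−1 } (where terms with bᵢ = 0 are omitted from the minimum). -/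
/-!
The norm of `a = ∑ bᵢ uⁱ` is the determinant of multiplication by `a` in the basis
`1, u, …, u^(q-1)`: its `(i, j)` entry is `b (i - j)`, multiplied by `t` when `i - j` wraps
around modulo `q`. For a permutation `σ`, the `q`-th power of the value of its term in the
Leibniz expansion is `∏ⱼ w (σ j - j)` with `w i = v(t)^i v(bᵢ)^q`, because the total number of
wrap-arounds is `(∑ⱼ (σ j - j)) / q`. The coset hypothesis makes the nonzero `w i` pairwise
distinct, so `w` has a unique maximizer `i₀`; the translation `j ↦ j + i₀` is then the only
permutation whose term has value `max w`, and the ultrametric inequality gives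
`v(det) = max w`.
-/

/-- In a linearly ordered commutative group with zero, `0` is the bottom element. -/
instance (priority := 10) {G : Type*} [LinearOrderedCommGroupWithZero G] : OrderBot G where
  bot := 0
  bot_le _ := zero_le'

open Finset Polynomial

theorem Fin.val_sub_add_val {q : ℕ} (i j : Fin q) :
    ((i - j : Fin q) : ℕ) + j = i + q * (if j ≤ i then 0 else 1) := by
  split_ifs with h
  · rw [Fin.coe_sub_iff_le.mpr h]; omega
  · rw [Fin.coe_sub_iff_lt.mpr (not_le.mp h)]; omega

theorem Fin.sum_val_perm_sub {q : ℕ} (σ : Equiv.Perm (Fin q)) :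
    ∑ j, ((σ j - j : Fin q) : ℕ) = q * ∑ j, (if j ≤ σ j then 0 else 1) := by
  have h := Finset.sum_congr rfl fun j (_ : j ∈ univ) => Fin.val_sub_add_val (σ j) j
  rw [sum_add_distrib, sum_add_distrib, ← mul_sum, Equiv.sum_comp σ (fun j => (j : ℕ))] at h
  omega

theorem Finset.prod_lt_pow_card {ι G : Type*} [LinearOrderedCommGroupWithZero G] {s : Finset ι}
    {f : ι → G} {S : G} (hS : S ≠ 0) (hle : ∀ i ∈ s, f i ≤ S) (hlt : ∃ i ∈ s, f i < S) :
    ∏ i ∈ s, f i < S ^ s.card := by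
  by_cases hf : ∃ i ∈ s, f i = 0
  · rw [prod_eq_zero_iff.mpr hf]
    exact pow_pos (zero_lt_iff.mpr hS) _
  · push Not at hf
    rw [← prod_const]
    exact prod_lt_prod (fun i hi => zero_lt_iff.mpr (hf i hi)) hle hlt

theorem Fintype.exists_eq_sup_and_lt_sup_of_injOn {ι α : Type*} [Fintype ι] [LinearOrder α]
    [OrderBot α] {f : ι → α} (hf : Set.InjOn f {i | f i ≠ ⊥}) (hS : univ.sup f ≠ ⊥) :
    ∃ i₀, f i₀ = univ.sup f ∧ ∀ i ≠ i₀, f i < univ.sup f := by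
  have hne : (univ : Finset ι).Nonempty := by
    by_contra h
    exact hS (by rw [not_nonempty_iff_eq_empty.mp h, sup_empty])
  obtain ⟨i₀, -, hi₀⟩ := exists_mem_eq_sup univ hne f
  refine ⟨i₀, hi₀.symm, fun i hi => lt_of_le_of_ne (le_sup (mem_univ i)) fun h => hi ?_⟩
  exact hf (h ▸ hS : f i ≠ ⊥) (hi₀ ▸ hS : f i₀ ≠ ⊥) (h.trans hi₀)

theorem Valuation.map_units_int_smul {R Γ₀ : Type*} [Ring R] [LinearOrderedCommMonoidWithZero Γ₀]
    (v : Valuation R Γ₀) (n : ℤˣ) (x : R) : v (n • x) = v x := by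
  rcases Int.units_eq_one_or n with rfl | rfl <;> simp

/-- The matrix of multiplication by `∑ i, b i * u ^ i` in the basis `1, u, …, u ^ (q - 1)` when
`u ^ q = t`. -/
def twistedCirculant {R : Type*} [CommRing R] {q : ℕ} (t : R) (b : Fin q → R) :
    Matrix (Fin q) (Fin q) R :=
  fun i j => (if j ≤ i then 1 else t) * b (i - j)

section Valuation

variable {R Γ₀ : Type*} [CommRing R] [LinearOrderedCommGroupWithZero Γ₀] (v : Valuation R Γ₀)
  {q : ℕ} (t : R) (b : Fin q → R)

theorem valuation_prod_twistedCirculant_pow (σ : Equiv.Perm (Fin q)) :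
    v (∏ j, twistedCirculant t b (σ j) j) ^ q
      = ∏ j, v t ^ ((σ j - j : Fin q) : ℕ) * v (b (σ j - j)) ^ q := by
  have hentry : ∀ j, v (twistedCirculant t b (σ j) j)
      = v t ^ (if j ≤ σ j then 0 else 1) * v (b (σ j - j)) := by
    intro j
    simp only [twistedCirculant, map_mul, apply_ite v, map_one]
    split_ifs <;> simp
  rw [map_prod, prod_congr rfl fun j _ => hentry j, prod_mul_distrib, prod_pow_eq_pow_sum,
    mul_pow, ← pow_mul, mul_comm _ q, ← Fin.sum_val_perm_sub, ← prod_pow_eq_pow_sum,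
    ← prod_pow, prod_mul_distrib]

theorem valuation_prod_twistedCirculant_addRight [NeZero q] (i : Fin q) :
    v (∏ j, twistedCirculant t b (j + i) j) = v t ^ (i : ℕ) * v (b i) ^ q := by
  refine (pow_left_inj₀ zero_le zero_le (NeZero.ne q)).mp ?_
  simpa using valuation_prod_twistedCirculant_pow v t b (Equiv.addRight i)

theorem valuation_prod_twistedCirculant_le [NeZero q] (σ : Equiv.Perm (Fin q)) :
    v (∏ j, twistedCirculant t b (σ j) j)
      ≤ univ.sup fun i : Fin q => v t ^ (i : ℕ) * v (b i) ^ q := by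
  refine (pow_le_pow_iff_left₀ zero_le zero_le (NeZero.ne q)).mp ?_
  rw [valuation_prod_twistedCirculant_pow]
  simpa using prod_le_pow_card univ _ _ fun j _ =>
    le_sup (f := fun i : Fin q => v t ^ (i : ℕ) * v (b i) ^ q) (mem_univ (σ j - j))

theorem valuation_prod_twistedCirculant_lt [NeZero q] {i₀ : Fin q}
    (hmax : ∀ i ≠ i₀,
      v t ^ (i : ℕ) * v (b i) ^ q < univ.sup fun i : Fin q => v t ^ (i : ℕ) * v (b i) ^ q)
    (hS : (univ.sup fun i : Fin q => v t ^ (i : ℕ) * v (b i) ^ q) ≠ 0)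
    {σ : Equiv.Perm (Fin q)} (hσ : σ ≠ Equiv.addRight i₀) :
    v (∏ j, twistedCirculant t b (σ j) j)
      < univ.sup fun i : Fin q => v t ^ (i : ℕ) * v (b i) ^ q := by
  obtain ⟨j, hj⟩ : ∃ j, σ j - j ≠ i₀ := by
    by_contra! h
    exact hσ (Equiv.ext fun j => by simp [← h j])
  refine (pow_lt_pow_iff_left₀ zero_le zero_le (NeZero.ne q)).mp ?_
  rw [valuation_prod_twistedCirculant_pow]
  simpa using prod_lt_pow_card hS
    (fun j _ => le_sup (f := fun i : Fin q => v t ^ (i : ℕ) * v (b i) ^ q) (mem_univ (σ j - j)))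
    ⟨j, mem_univ j, hmax _ hj⟩

theorem valuation_det_twistedCirculant [NeZero q]
    (hinj : Set.InjOn (fun i : Fin q => v t ^ (i : ℕ) * v (b i) ^ q)
      {i | v t ^ (i : ℕ) * v (b i) ^ q ≠ 0}) :
    v (twistedCirculant t b).det = univ.sup fun i : Fin q => v t ^ (i : ℕ) * v (b i) ^ q := by
  classical
  set S := univ.sup fun i : Fin q => v t ^ (i : ℕ) * v (b i) ^ q
  have hle : v (twistedCirculant t b).det ≤ S := by
    rw [Matrix.det_apply]
    refine v.map_sum_le fun σ _ => ?_
    rw [v.map_units_int_smul]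
    exact valuation_prod_twistedCirculant_le v t b σ
  by_cases hS : S = 0
  · exact le_antisymm hle (hS ▸ zero_le)
  obtain ⟨i₀, hi₀, hmax⟩ := Fintype.exists_eq_sup_and_lt_sup_of_injOn
    (f := fun i : Fin q => v t ^ (i : ℕ) * v (b i) ^ q)
    (by simpa only [bot_eq_zero] using hinj) (by rwa [bot_eq_zero])
  have hσ₀ : v (∏ j, twistedCirculant t b (Equiv.addRight i₀ j) j) = S := by
    simpa [hi₀] using valuation_prod_twistedCirculant_addRight v t b i₀
  rw [Matrix.det_apply, v.map_sum_eq_of_lt (mem_univ (Equiv.addRight i₀)), v.map_units_int_smul,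
    hσ₀]
  intro σ hσ
  rw [v.map_units_int_smul, v.map_units_int_smul, hσ₀]
  exact valuation_prod_twistedCirculant_lt v t b hmax hS (by simpa using hσ)

end Valuation

section Algebra

variable {F K : Type*} [CommRing F] [CommRing K] [Algebra F K] {q : ℕ} {t : F} {u : K}

theorem pow_val_sub_mul_pow_val (hu : u ^ q = algebraMap F K t) (i j : Fin q) :
    u ^ ((i - j : Fin q) : ℕ) * u ^ (j : ℕ)
      = algebraMap F K (if j ≤ i then 1 else t) * u ^ (i : ℕ) := by
  rw [← pow_add, Fin.val_sub_add_val, pow_add, pow_mul, hu, mul_comm]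
  split_ifs <;> simp

theorem sum_mul_pow_val [NeZero q] (hu : u ^ q = algebraMap F K t) (b : Fin q → F) (j : Fin q) :
    (∑ i : Fin q, algebraMap F K (b i) * u ^ (i : ℕ)) * u ^ (j : ℕ)
      = ∑ i : Fin q, twistedCirculant t b i j • u ^ (i : ℕ) := by
  rw [sum_mul, ← (Equiv.subRight j).sum_comp]
  refine sum_congr rfl fun i _ => ?_
  rw [Equiv.subRight_apply, mul_assoc, pow_val_sub_mul_pow_val hu, Algebra.smul_def]
  simp only [twistedCirculant, map_mul]
  ring

theorem leftMulMatrix_eq_twistedCirculant [NeZero q] (B : Module.Basis (Fin q) F K)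
    (hB : ∀ i, B i = u ^ (i : ℕ)) (hu : u ^ q = algebraMap F K t) (b : Fin q → F) :
    Algebra.leftMulMatrix B (∑ i : Fin q, algebraMap F K (b i) * u ^ (i : ℕ))
      = twistedCirculant t b := by
  ext i j
  rw [Algebra.leftMulMatrix_eq_repr_mul, hB, sum_mul_pow_val hu]
  simp only [← hB, B.repr_sum_self]

end Algebra

theorem exists_basis_pow_of_adjoin_eq_top {F K : Type*} [Field F] [CommRing K] [Algebra F K]
    {u : K} (hint : IsIntegral F u) (hadj : Algebra.adjoin F {u} = ⊤) {q : ℕ}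
    (hdeg : (minpoly F u).natDegree = q) :
    ∃ B : Module.Basis (Fin q) F K, ∀ i, B i = u ^ (i : ℕ) := by
  let pb := PowerBasis.ofAdjoinEqTop hint hadj
  refine ⟨pb.basis.reindex (finCongr (by simpa [pb] using hdeg)), fun i => ?_⟩
  rw [Module.Basis.reindex_apply, PowerBasis.basis_eq_pow]
  simp [pb]
  rfl

theorem valuation_norm_eq_min_general
    (F : Type*) [Field F] (Γ₀ : Type*) [LinearOrderedCommGroupWithZero Γ₀]
    (v : Valuation F Γ₀)
    (q : ℕ) (hq : q.Prime) (t : F) (ht : t ≠ 0)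
    (hcosets : ∀ i j : Fin q, i ≠ j → ∀ x y : F, x ≠ 0 → y ≠ 0 →
      v x ^ q * v t ^ (i : ℕ) ≠ v y ^ q * v t ^ (j : ℕ))
    (K : Type*) [Field K] [Algebra F K] (u : K)
    (hu : u ^ q = algebraMap F K t)
    (hadj : Algebra.adjoin F {u} = ⊤)
    (b : Fin q → F) :
    v (Algebra.norm F (∑ i : Fin q, algebraMap F K (b i) * u ^ (i : ℕ)))
      = Finset.univ.sup (fun i : Fin q => v t ^ (i : ℕ) * v (b i) ^ q) := by
  have : NeZero q := ⟨hq.ne_zero⟩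
  -- `v t` is not a `q`-th power in the value group, so `t` is not a `q`-th power in `F`.
  have hirr : Irreducible (X ^ q - C t) := by
    refine X_pow_sub_C_irreducible_of_prime hq fun s hs => ?_
    have hs0 : s ≠ 0 := by
      rintro rfl
      exact ht (by simpa [hq.ne_zero] using hs.symm)
    exact hcosets ⟨1, hq.one_lt⟩ ⟨0, hq.pos⟩ (by simp [Fin.ext_iff]) 1 s one_ne_zero hs0
      (by simp [← hs])
  have hmonic : (X ^ q - C t).Monic := monic_X_pow_sub_C t hq.ne_zero
  have heval : aeval u (X ^ q - C t) = 0 := by simp [hu]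
  obtain ⟨B, hB⟩ := exists_basis_pow_of_adjoin_eq_top ⟨_, hmonic, heval⟩ hadj
    (by rw [← minpoly.eq_of_irreducible_of_monic hirr heval hmonic, natDegree_X_pow_sub_C])
  rw [Algebra.norm_eq_matrix_det B, leftMulMatrix_eq_twistedCirculant B hB hu,
    valuation_det_twistedCirculant]
  intro i hi j hj hij
  simp only [Set.mem_ofPred_eq] at hi hj hij
  by_contra hne
  have hbi : b i ≠ 0 := fun h => hi (by simp [h, hq.ne_zero])
  have hbj : b j ≠ 0 := fun h => hj (by simp [h, hq.ne_zero])
  exact hcosets i j hne _ _ hbi hbj (by rw [mul_comm, hij, mul_comm])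

/-- Let `(F,v)` be a valued field of equal characteristic with value group `Γ`, `q` a prime,
and `t ∈ F` such that the cosets `qΓ, qΓ + v(t), …, qΓ + (q−1)v(t)` are pairwise distinct
in `Γ` (stated multiplicatively). Assume `F` contains a primitive `q`-th root of unity and
let `K = F(u)` with `u^q = t` (a cyclic extension of degree `q`). Then for every
`a = b₀ + b₁u + ⋯ + b_{q−1}u^{q−1}` one has
`v(N_{K/F}(a)) = min { i·v(t) + q·v(bᵢ) }` (terms with `bᵢ = 0` omitted); with the
multiplicative convention for valuations this minimum becomes the supremum of the values
`v(t)^i · v(bᵢ)^q`, where the terms with `bᵢ = 0` contribute the bottom element `0`. -/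
theorem valuation_norm_eq_min
    (F : Type*) [Field F] (Γ₀ : Type*) [LinearOrderedCommGroupWithZero Γ₀]
    (v : Valuation F Γ₀)
    (hchar : ringChar F = ringChar (IsLocalRing.ResidueField v.valuationSubring))
    (q : ℕ) (hq : q.Prime) (t : F) (ht : t ≠ 0)
    (hcosets : ∀ i j : Fin q, i ≠ j → ∀ x y : F, x ≠ 0 → y ≠ 0 →
      v x ^ q * v t ^ (i : ℕ) ≠ v y ^ q * v t ^ (j : ℕ))
    (hroot : ∃ ζ : F, IsPrimitiveRoot ζ q)
    (K : Type*) [Field K] [Algebra F K] (u : K)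
    (hu : u ^ q = algebraMap F K t)
    (hadj : Algebra.adjoin F {u} = ⊤)
    (b : Fin q → F) :
    v (Algebra.norm F (∑ i : Fin q, algebraMap F K (b i) * u ^ (i : ℕ)))
      = Finset.univ.sup (fun i : Fin q => v t ^ (i : ℕ) * v (b i) ^ q) :=
  valuation_norm_eq_min_general F Γ₀ v q hq t ht hcosets K u hu hadj b
end

section
/- Let q be a prime number and identify the index set {0, …, q−1} with the finite field 𝔽_q. Let c ∈ 𝔽_q^q be a tuple whose distinct values c₁, …, c_k occur with multiplicities l₁, …, l_k (so l₁ + ⋯ + l_k = q), and suppose c_0 + c_1 + ⋯ + c_{q−1} ≠ 0 in 𝔽_q. Then for every λ ∈ 𝔽_q, the number of anagrams d of c with Σ̃(d) = λ equals (q−1)! / (l₁! ⋯ l_k!), i.e. |An^λ(c)| = (q−1)!/(l₁!⋯l_k!). -/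
/-- The set of anagrams of a tuple `c ∈ 𝔽_q^q` (indexed by `𝔽_q = ZMod q`): all tuples
obtained from `c` by permuting the entries. -/
def anagrams (q : ℕ) [NeZero q] (c : ZMod q → ZMod q) : Finset (ZMod q → ZMod q) :=
  Finset.univ.filter (fun d => ∃ σ : Equiv.Perm (ZMod q), d = c ∘ σ)

/-- `An^λ(c)`: the anagrams `d` of `c` with weighted sum `Σ̃(d) = Σ_{i ∈ 𝔽_q} i·d_i = λ`. -/
def anagramsLevel (q : ℕ) [NeZero q] (c : ZMod q → ZMod q) (lam : ZMod q) :
    Finset (ZMod q → ZMod q) :=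
  (anagrams q c).filter (fun d => ∑ i : ZMod q, i * d i = lam)

/-- The multiplicity with which the value `a ∈ 𝔽_q` occurs in the tuple `c ∈ 𝔽_q^q`. -/
def multiplicityOf (q : ℕ) [NeZero q] (c : ZMod q → ZMod q) (a : ZMod q) : ℕ :=
  (Finset.univ.filter (fun i : ZMod q => c i = a)).card

/-!
Translating the indices by `t` turns an anagram `d` of `c` into the anagram `i ↦ d (i + t)`
and lowers its weighted sum by `t · Σ c`. When `Σ c` is a unit, these translations therefore
permute the `q` levels `An^λ(c)` transitively, so all levels have the same size
`|An(c)| / q`. By orbit–stabilizer for permutations acting on tuples,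
`|An(c)| · l₁! ⋯ l_k! = q!`, and dividing by `q` gives the claim.
-/

open Finset Equiv MulAction Nat

theorem card_image_comp_perm_mul_prod_factorial {ι α : Type*} [Fintype ι] [DecidableEq ι]
    [Fintype α] [DecidableEq α] (c : ι → α) :
    #(univ.image fun σ : Perm ι => c ∘ σ) * ∏ a, (#{i | c i = a})! = (Fintype.card ι)! := by
  have horbit : orbit (Perm ι)ᵈᵐᵃ c = Set.range fun σ : Perm ι => c ∘ σ := by
    ext d
    simp only [mem_orbit_iff, Set.mem_range]
    constructor
    · rintro ⟨g, rfl⟩; exact ⟨DomMulAct.mk.symm g, rfl⟩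
    · rintro ⟨σ, rfl⟩; exact ⟨DomMulAct.mk σ, rfl⟩
  have hstab : Nat.card (stabilizer (Perm ι)ᵈᵐᵃ c) = ∏ a, (#{i | c i = a})! := by
    rw [← Nat.card_congr (subtypeEquiv DomMulAct.mk fun _ ↦ DomMulAct.mem_stabilizer_iff.symm)]
    simp only [symm_apply_apply, Nat.card_eq_fintype_card, DomMulAct.stabilizer_card c,
      Fintype.card_subtype]
  rw [← Fintype.card_perm, ← Nat.card_eq_fintype_card,
    Nat.card_congr (DomMulAct.mk (M := Perm ι)), ← (stabilizer (Perm ι)ᵈᵐᵃ c).index_mul_card,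
    index_stabilizer, horbit, hstab,
    ← Set.ncard_coe_finset, coe_image, coe_univ, Set.image_univ]

theorem sum_mul_comp_add_right {R : Type*} [CommRing R] [Fintype R] (d : R → R) (t : R) :
    ∑ i, i * d (i + t) = ∑ i, i * d i - t * ∑ i, d i := by
  calc ∑ i, i * d (i + t) = ∑ j, (j - t) * d j :=
        Fintype.sum_equiv (Equiv.addRight t) _ _ fun i ↦ by simp
    _ = ∑ i, i * d i - t * ∑ i, d i := by simp only [sub_mul, sum_sub_distrib, mul_sum]

section Anagrams

variable {q : ℕ} [NeZero q] {c d : ZMod q → ZMod q}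

theorem anagrams_eq_image_comp_perm (c : ZMod q → ZMod q) :
    anagrams q c = univ.image fun σ : Perm (ZMod q) => c ∘ σ := by
  ext d
  simp [anagrams, eq_comm]

theorem card_anagrams_mul_prod_factorial (c : ZMod q → ZMod q) :
    #(anagrams q c) * ∏ a, (multiplicityOf q c a)! = q ! := by
  have h := card_image_comp_perm_mul_prod_factorial c
  rwa [ZMod.card, ← anagrams_eq_image_comp_perm] at h

theorem sum_eq_of_mem_anagrams (hd : d ∈ anagrams q c) : ∑ i, d i = ∑ i, c i := by
  obtain ⟨-, σ, rfl⟩ := mem_filter.mp hd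
  exact Equiv.sum_comp σ c

theorem comp_perm_mem_anagrams (hd : d ∈ anagrams q c) (τ : Perm (ZMod q)) :
    d ∘ τ ∈ anagrams q c := by
  obtain ⟨-, σ, rfl⟩ := mem_filter.mp hd
  exact mem_filter.mpr ⟨mem_univ _, σ * τ, rfl⟩

theorem comp_addRight_mem_anagramsLevel {lam : ZMod q} (hd : d ∈ anagramsLevel q c lam)
    (t : ZMod q) : d ∘ Equiv.addRight t ∈ anagramsLevel q c (lam - t * ∑ i, c i) := by
  obtain ⟨hd, hlam⟩ := mem_filter.mp hd
  refine mem_filter.mpr ⟨comp_perm_mem_anagrams hd _, ?_⟩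
  simp only [Function.comp_apply, coe_addRight, sum_mul_comp_add_right, hlam,
    sum_eq_of_mem_anagrams hd]

theorem card_anagramsLevel_eq (hc : IsUnit (∑ i, c i)) (lam lam' : ZMod q) :
    #(anagramsLevel q c lam) = #(anagramsLevel q c lam') := by
  obtain ⟨t, ht⟩ : ∃ t, t * ∑ i, c i = lam - lam' :=
    ⟨(lam - lam') * ↑hc.unit⁻¹, by rw [mul_assoc, hc.val_inv_mul, mul_one]⟩
  refine card_nbij' (· ∘ Equiv.addRight t) (· ∘ Equiv.addRight (-t)) (fun d hd ↦ ?_)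
    (fun d hd ↦ ?_) (fun d _ ↦ ?_) (fun d _ ↦ ?_)
  · have h := comp_addRight_mem_anagramsLevel hd t
    rwa [ht, sub_sub_cancel] at h
  · have h := comp_addRight_mem_anagramsLevel hd (-t)
    rwa [neg_mul, ht, sub_neg_eq_add, add_sub_cancel] at h
  · ext i; simp
  · ext i; simp

theorem card_anagrams_eq_mul_card_anagramsLevel (hc : IsUnit (∑ i, c i)) (lam : ZMod q) :
    #(anagrams q c) = q * #(anagramsLevel q c lam) := by
  calc #(anagrams q c) = ∑ lam' : ZMod q, #(anagramsLevel q c lam') :=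
        card_eq_sum_card_fiberwise fun d _ ↦ mem_univ (∑ i, i * d i)
    _ = q * #(anagramsLevel q c lam) := by
        rw [sum_congr rfl fun lam' _ ↦ card_anagramsLevel_eq hc lam' lam, sum_const,
          Finset.card_univ, ZMod.card, smul_eq_mul]

end Anagrams

/-- For a prime `q` and a tuple `c ∈ 𝔽_q^q` whose distinct values occur with multiplicities
`l₁, …, l_k` and whose entries sum to a nonzero element of `𝔽_q`, for every `λ ∈ 𝔽_q` one has
`|An^λ(c)| = (q−1)!/(l₁!⋯l_k!)`, stated here in the form
`|An^λ(c)| · l₁!⋯l_k! = (q−1)!`. -/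
theorem anagramsLevel_card_of_sum_ne_zero (q : ℕ) [Fact q.Prime]
    (c : ZMod q → ZMod q) (hc : (∑ i : ZMod q, c i) ≠ 0) (lam : ZMod q) :
    (anagramsLevel q c lam).card * ∏ a : ZMod q, Nat.factorial (multiplicityOf q c a) = Nat.factorial (q - 1) := by
  have hq : 0 < q := (Fact.out : q.Prime).pos
  apply Nat.eq_of_mul_eq_mul_left hq
  rw [← mul_assoc, ← card_anagrams_eq_mul_card_anagramsLevel hc.isUnit,
    card_anagrams_mul_prod_factorial, Nat.mul_factorial_pred hq.ne']
end
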